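/- arXiv:2308.00424 — 2 statements merged into one kernel-verified Lean document; each statement's English description precedes it below -/
import Mathlib

section
/- If a smooth function f : ℝ → ℝ is at most linear (i.e., there exist constants a, b with |f(t)| ≤ a·t + b for all t ≥ 0), its derivative satisfies f'(r)/r → 0 along a suitable sequence, and for all r > 0 the inequality λ/3 − f'(r)/r + 2f(r)/r² − (2/r³)∫₀^r f(t) dt ≤ (n−1)/r² holds, then λ ≤ 0. -/
open Filter

/-- Real-analysis core of Theorem 1.9: if a smooth `f : ℝ → ℝ` is at most linear,
`f'(r)/r → 0` along a suitable sequence, and for all `r > 0`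
`λ/3 − f'(r)/r + 2 f(r)/r² − (2/r³) ∫₀^r f ≤ (n−1)/r²`, then `λ ≤ 0`. -/
theorem stmt1 (f : ℝ → ℝ) (hf : ContDiff ℝ (⊤ : ℕ∞) f) (lam : ℝ) (n : ℕ) (hn : 2 ≤ n)
    (hlin : ∃ a b : ℝ, ∀ t ≥ (0:ℝ), |f t| ≤ a * t + b)
    (hderiv : ∃ u : ℕ → ℝ, Tendsto u atTop atTop ∧
      Tendsto (fun k => deriv f (u k) / u k) atTop (nhds 0))
    (hineq : ∀ r > (0:ℝ), lam / 3 - deriv f r / r + 2 * f r / r ^ 2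
        - (2 / r ^ 3) * ∫ t in (0:ℝ)..r, f t ≤ ((n : ℝ) - 1) / r ^ 2) :
    lam ≤ 0 := by
  obtain ⟨a, b, hab⟩ := hlin
  obtain ⟨u, hu, hud⟩ := hderiv
  have hfc : Continuous f := hf.continuous
  -- helper limits
  have hinv : Tendsto (fun k => (u k)⁻¹) atTop (nhds 0) :=
    tendsto_inv_atTop_zero.comp hu
  have hu2 : Tendsto (fun k => (u k) ^ 2) atTop atTop :=
    (tendsto_pow_atTop (two_ne_zero)).comp hu
  have hinv2 : Tendsto (fun k => ((u k) ^ 2)⁻¹) atTop (nhds 0) :=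
    tendsto_inv_atTop_zero.comp hu2
  have hcdiv : ∀ c : ℝ, Tendsto (fun k => c / u k) atTop (nhds 0) := by
    intro c
    simpa [div_eq_mul_inv] using hinv.const_mul c
  have hcdiv2 : ∀ c : ℝ, Tendsto (fun k => c / (u k) ^ 2) atTop (nhds 0) := by
    intro c
    simpa [div_eq_mul_inv] using hinv2.const_mul c
  have hupos : ∀ᶠ k in atTop, (1:ℝ) ≤ u k := hu.eventually_ge_atTop 1
  -- bound the integral
  have hint : ∀ r : ℝ, 0 < r → |∫ t in (0:ℝ)..r, f t| ≤ a * r ^ 2 / 2 + b * r := by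
    intro r hr
    have h1 : |∫ t in (0:ℝ)..r, f t| ≤ ∫ t in (0:ℝ)..r, |f t| :=
      intervalIntegral.abs_integral_le_integral_abs hr.le
    have h2 : (∫ t in (0:ℝ)..r, |f t|) ≤ ∫ t in (0:ℝ)..r, (a * t + b) := by
      apply intervalIntegral.integral_mono_on hr.le
      · exact (hfc.abs).intervalIntegrable 0 r
      · exact ((continuous_const.mul continuous_id).add continuous_const).intervalIntegrable 0 r
      · intro t ht
        exact hab t ht.1
    have h3 : (∫ t in (0:ℝ)..r, (a * t + b)) = a * r ^ 2 / 2 + b * r := by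
      have hia : IntervalIntegrable (fun t : ℝ => a * t) MeasureTheory.volume 0 r :=
        (continuous_const.mul continuous_id).intervalIntegrable 0 r
      have hib : IntervalIntegrable (fun _ : ℝ => b) MeasureTheory.volume 0 r :=
        continuous_const.intervalIntegrable 0 r
      rw [intervalIntegral.integral_add hia hib, intervalIntegral.integral_const_mul,
        integral_id, intervalIntegral.integral_const]
      simp [smul_eq_mul]
      ring
    linarith
  -- second term tends to 0
  have hT2 : Tendsto (fun k => 2 * f (u k) / (u k) ^ 2) atTop (nhds 0) := by
    apply squeeze_zero_norm' (a := fun k => 2 * a / u k + 2 * b / (u k) ^ 2)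
    · filter_upwards [hupos] with k hk
      have hk0 : (0:ℝ) < u k := lt_of_lt_of_le one_pos hk
      have hb := hab (u k) hk0.le
      have h2 : |2 * f (u k) / (u k) ^ 2| = 2 * |f (u k)| / (u k) ^ 2 := by
        rw [abs_div, abs_mul]
        simp [abs_of_pos hk0, abs_of_pos (pow_pos hk0 2)]
      rw [Real.norm_eq_abs, h2]
      have key : 2 * a / u k + 2 * b / (u k) ^ 2 = 2 * (a * u k + b) / (u k) ^ 2 := by
        field_simp
      rw [key]
      gcongr
    · have := (hcdiv (2*a)).add (hcdiv2 (2*b))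
      simpa using this
  -- third term tends to 0
  have hT3 : Tendsto (fun k => (2 / (u k) ^ 3) * ∫ t in (0:ℝ)..(u k), f t) atTop (nhds 0) := by
    apply squeeze_zero_norm' (a := fun k => a / u k + 2 * b / (u k) ^ 2)
    · filter_upwards [hupos] with k hk
      have hk0 : (0:ℝ) < u k := lt_of_lt_of_le one_pos hk
      have hb := hint (u k) hk0
      have h3 : |(2 / (u k) ^ 3) * ∫ t in (0:ℝ)..(u k), f t|
          = (2 / (u k) ^ 3) * |∫ t in (0:ℝ)..(u k), f t| := by
        rw [abs_mul, abs_of_pos (div_pos two_pos (pow_pos hk0 3))]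
      rw [Real.norm_eq_abs, h3]
      have key : (2 / (u k) ^ 3) * (a * (u k) ^ 2 / 2 + b * u k)
          = a / u k + 2 * b / (u k) ^ 2 := by
        field_simp
      rw [← key]
      apply mul_le_mul_of_nonneg_left hb (le_of_lt (div_pos two_pos (pow_pos hk0 3)))
    · have := (hcdiv a).add (hcdiv2 (2*b))
      simpa using this
  -- fourth
  have hT4 : Tendsto (fun k => ((n:ℝ) - 1) / (u k) ^ 2) atTop (nhds 0) := hcdiv2 _
  -- combine
  have hsum : Tendsto (fun k => deriv f (u k) / u k - 2 * f (u k) / (u k) ^ 2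
      + (2 / (u k) ^ 3) * (∫ t in (0:ℝ)..(u k), f t) + ((n:ℝ) - 1) / (u k) ^ 2)
      atTop (nhds 0) := by
    have := ((hud.sub hT2).add hT3).add hT4
    simpa using this
  have hle : lam / 3 ≤ 0 := by
    apply ge_of_tendsto hsum
    filter_upwards [hupos] with k hk
    have hk0 : (0:ℝ) < u k := lt_of_lt_of_le one_pos hk
    have := hineq (u k) hk0
    linarith
  linarith
end

section
/- Let h : [0, ∞) → ℝ be smooth with (1/r)∫₀^r t²(λ − h''(t)) dt ≤ n − 1 for all r > 0, where λ ∈ ℝ and n ≥ 2, and suppose |h(t)| ≤ a·t + b and |h'(r)| ≤ c for constants a, b, c ≥ 0. Then λ ≤ 0. -/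
set_option maxHeartbeats 1000000

/-- One-variable analysis core of Theorem 1.9: if `h` is smooth with
`(1/r)∫₀^r t²(λ − h''(t)) dt ≤ n−1` for all `r > 0`, `|h(t)| ≤ a t + b` and
`|h'(r)| ≤ c` for nonnegative constants `a, b, c`, then `λ ≤ 0`. -/
theorem stmt18 (h : ℝ → ℝ) (hh : ContDiff ℝ (⊤ : ℕ∞) h) (lam : ℝ) (n : ℕ) (hn : 2 ≤ n)
    (a b c : ℝ) (ha : 0 ≤ a) (hb : 0 ≤ b) (hc : 0 ≤ c)
    (hineq : ∀ r > (0:ℝ),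
      (1 / r) * ∫ t in (0:ℝ)..r, t ^ 2 * (lam - deriv (deriv h) t) ≤ (n : ℝ) - 1)
    (hlin : ∀ t ≥ (0:ℝ), |h t| ≤ a * t + b)
    (hder : ∀ r ≥ (0:ℝ), |deriv h r| ≤ c) :
    lam ≤ 0 := by
  have hh0 : ContDiff ℝ ((⊤:ℕ∞):WithTop ℕ∞) h := hh.of_le (by simp)
  obtain ⟨hdiff, hh'⟩ := contDiff_infty_iff_deriv.mp hh0
  obtain ⟨hdiff', hh''⟩ := contDiff_infty_iff_deriv.mp hh'
  have hcont : Continuous h := hdiff.continuous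
  have hcont' : Continuous (deriv h) := hdiff'.continuous
  have hcont'' : Continuous (deriv (deriv h)) := hh''.continuous
  set A : ℝ := (n:ℝ) - 1 + 4*b with hA
  set B : ℝ := c + 3*a with hB
  have key : ∀ r > (0:ℝ), lam/3 ≤ A/r^2 + B/r := by
    intro r hr
    have H := hineq r hr
    have e1 : (∫ t in (0:ℝ)..r, t^2 * deriv (deriv h) t)
        = r^2 * deriv h r - ∫ t in (0:ℝ)..r, 2*t * deriv h t := by
      have := intervalIntegral.integral_mul_deriv_eq_deriv_mul (a := (0:ℝ)) (b := r)
        (u := fun t : ℝ => t^2) (u' := fun t : ℝ => 2*t)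
        (v := deriv h) (v' := deriv (deriv h))
        (fun x _ => by simpa using (hasDerivAt_pow 2 x))
        (fun x _ => (hdiff' x).hasDerivAt)
        (Continuous.intervalIntegrable (by fun_prop) _ _)
        (hcont''.intervalIntegrable _ _)
      simpa using this
    have e2 : (∫ t in (0:ℝ)..r, 2*t * deriv h t)
        = 2*r * h r - ∫ t in (0:ℝ)..r, 2 * h t := by
      have := intervalIntegral.integral_mul_deriv_eq_deriv_mul (a := (0:ℝ)) (b := r)
        (u := fun t : ℝ => 2*t) (u' := fun _ : ℝ => 2)
        (v := h) (v' := deriv h)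
        (fun x _ => by simpa using ((hasDerivAt_id x).const_mul 2))
        (fun x _ => (hdiff x).hasDerivAt)
        (Continuous.intervalIntegrable (by fun_prop) _ _)
        (hcont'.intervalIntegrable _ _)
      simpa using this
    have esplit : (∫ t in (0:ℝ)..r, t ^ 2 * (lam - deriv (deriv h) t))
        = lam * (r^3/3) - ∫ t in (0:ℝ)..r, t^2 * deriv (deriv h) t := by
      have : (fun t : ℝ => t ^ 2 * (lam - deriv (deriv h) t))
          = fun t : ℝ => lam * t^2 - t^2 * deriv (deriv h) t := by
        funext t; ring
      rw [this, intervalIntegral.integral_sub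
        (Continuous.intervalIntegrable (by fun_prop) _ _)
        (Continuous.intervalIntegrable (by fun_prop) _ _),
        intervalIntegral.integral_const_mul, integral_pow]
      ring
    -- bound on ∫ 2 h
    have hInt : |∫ t in (0:ℝ)..r, 2 * h t| ≤ a*r^2 + 2*b*r := by
      have h1 : |∫ t in (0:ℝ)..r, 2 * h t| ≤ ∫ t in (0:ℝ)..r, |2 * h t| := by
        simpa using intervalIntegral.abs_integral_le_integral_abs hr.le
          (f := fun t => 2 * h t)
      have h2 : (∫ t in (0:ℝ)..r, |2 * h t|) ≤ ∫ t in (0:ℝ)..r, 2*(a*t+b) := by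
        apply intervalIntegral.integral_mono_on hr.le
          ((continuous_const.mul hcont).abs.intervalIntegrable _ _)
          (Continuous.intervalIntegrable (by fun_prop) _ _)
        intro t ht
        have := hlin t ht.1
        show |2 * h t| ≤ 2 * (a*t+b)
        rw [abs_mul]
        calc |(2:ℝ)| * |h t| = 2 * |h t| := by norm_num
          _ ≤ 2 * (a*t+b) := by linarith [abs_nonneg (h t)]
      have h3 : (∫ t in (0:ℝ)..r, 2*(a*t+b)) = a*r^2 + 2*b*r := by
        rw [intervalIntegral.integral_const_mul]
        rw [intervalIntegral.integral_add (Continuous.intervalIntegrable (by fun_prop) _ _)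
          (intervalIntegrable_const), intervalIntegral.integral_const_mul,
          integral_id, intervalIntegral.integral_const]
        rw [smul_eq_mul]; ring
      linarith
    have hbd1 : |r^2 * deriv h r| ≤ c * r^2 := by
      rw [abs_mul, abs_of_nonneg (by positivity : (0:ℝ) ≤ r^2)]
      have := hder r hr.le
      nlinarith [sq_nonneg r]
    have hbd2 : |2*r * h r| ≤ 2*r*(a*r+b) := by
      rw [abs_mul, abs_of_nonneg (by positivity : (0:ℝ) ≤ 2*r)]
      have := hlin r hr.le
      nlinarith
    -- combine: lam * r^3/3 ≤ (n-1)*r + I where I = ∫ t² h''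
    have Hmul : lam * (r^3/3) - (∫ t in (0:ℝ)..r, t^2 * deriv (deriv h) t)
        ≤ ((n:ℝ)-1) * r := by
      have := mul_le_mul_of_nonneg_left H hr.le
      rw [esplit] at H
      have hr' : r ≠ 0 := ne_of_gt hr
      calc lam * (r^3/3) - (∫ t in (0:ℝ)..r, t^2 * deriv (deriv h) t)
          = r * ((1/r) * (lam * (r^3/3) - ∫ t in (0:ℝ)..r, t^2 * deriv (deriv h) t)) := by
            field_simp
        _ ≤ r * (((n:ℝ)-1)) := by
            apply mul_le_mul_of_nonneg_left _ hr.le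
            exact H
        _ = ((n:ℝ)-1) * r := by ring
    have habs : |∫ t in (0:ℝ)..r, t^2 * deriv (deriv h) t| ≤ B*r^2 + 4*b*r := by
      rw [e1, e2]
      calc |r^2 * deriv h r - (2*r * h r - ∫ t in (0:ℝ)..r, 2 * h t)|
          ≤ |r^2 * deriv h r| + |2*r * h r - ∫ t in (0:ℝ)..r, 2 * h t| := abs_sub _ _
        _ ≤ |r^2 * deriv h r| + (|2*r * h r| + |∫ t in (0:ℝ)..r, 2 * h t|) := by
            linarith [abs_sub (2*r * h r) (∫ t in (0:ℝ)..r, 2 * h t)]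
        _ ≤ c*r^2 + (2*r*(a*r+b) + (a*r^2 + 2*b*r)) := by linarith
        _ = B*r^2 + 4*b*r := by rw [hB]; ring
    have hfinal : lam * (r^3/3) ≤ A*r + B*r^2 := by
      have h9 := le_abs_self (∫ t in (0:ℝ)..r, t^2 * deriv (deriv h) t)
      rw [hA]; nlinarith [Hmul, habs]
    calc lam/3 = (lam * (r^3/3))/r^3 := by field_simp
      _ ≤ (A*r + B*r^2)/r^3 :=
          div_le_div_of_nonneg_right hfinal (by positivity)
      _ = A/r^2 + B/r := by
          rw [div_add_div _ _ (pow_ne_zero 2 hr.ne') hr.ne', div_eq_div_iff (by positivity) (by positivity)]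
          ring
  -- limit argument
  have t1 : Filter.Tendsto (fun r : ℝ => A/r^2 + B/r) Filter.atTop (nhds 0) := by
    have h1 : Filter.Tendsto (fun r : ℝ => A/r^2) Filter.atTop (nhds 0) :=
      Filter.Tendsto.div_atTop tendsto_const_nhds (Filter.tendsto_pow_atTop (by norm_num : (2:ℕ) ≠ 0))
    have h2 : Filter.Tendsto (fun r : ℝ => B/r) Filter.atTop (nhds 0) :=
      Filter.Tendsto.div_atTop tendsto_const_nhds Filter.tendsto_id
    simpa using h1.add h2
  have : lam/3 ≤ 0 :=
    ge_of_tendsto t1 (Filter.eventually_atTop.mpr ⟨1, fun r hr => key r (by linarith)⟩)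
  linarith
end
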